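/- For ε > 0, let F < 0, λ₁ ≤ 0, γ ≤ 0 with γ² + 8λ₁F > 0, and define y(x) := (2√(−F)/√(1+ε))·artanh(x/√(1+ε)) and W(x) := 2F/(γ − √(γ²+8λ₁F)·cosh y(x)) for x ∈ [−1,1]. Then W > 0 on [−1,1], W is even, W'(0) = 0, and W satisfies the ODE (W'/(2W))² = (2λ₁W² + γW − F)/(1+ε−x²)² on (−1,1). -/

import Mathlib

/-!
Put D = √(γ² + 8λ₁F) and a = √(−F). Since y' = 2a/(1 + ε − x²), the logarithmic derivative
of W = 2F/(γ − D cosh y) is D sinh y · y'/(γ − D cosh y). Squaring, and using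
cosh² − sinh² = 1 together with D² = γ² + 8λ₁F, turns a²(D sinh y/(γ − D cosh y))² into
2λ₁W² + γW − F. Positivity comes from γ − D cosh y < 0, evenness from the oddness of artanh.
-/

open Real Set

/-- The inverse hyperbolic tangent. -/
noncomputable def artanh (x : ℝ) : ℝ := (1/2) * Real.log ((1 + x) / (1 - x))

lemma artanh_neg (x : ℝ) : _root_.artanh (-x) = -_root_.artanh x := by
  have h : (1 + -x) / (1 - -x) = ((1 + x) / (1 - x))⁻¹ := by rw [inv_div]; ring_nf
  rw [_root_.artanh, _root_.artanh, h, log_inv]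
  ring

lemma hasDerivAt_artanh {x : ℝ} (hx : x ∈ Ioo (-1) 1) :
    HasDerivAt _root_.artanh (1 - x ^ 2)⁻¹ x := by
  obtain ⟨hx₁, hx₂⟩ := hx
  have h₁ : (1 : ℝ) - x ≠ 0 := by linarith
  have h₂ : (1 : ℝ) + x ≠ 0 := by linarith
  have h₃ : (1 : ℝ) - x ^ 2 ≠ 0 := by nlinarith
  have hquot := ((hasDerivAt_id' x).const_add 1).fun_div ((hasDerivAt_id' x).const_sub 1) h₁
  have hlog := (hquot.log (div_ne_zero h₂ h₁)).const_mul (1 / 2)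
  refine hlog.congr_deriv ?_
  field_simp
  ring

lemma hasDerivAt_div_mul_artanh_div {s x : ℝ} (k : ℝ) (hs : 0 < s) (hx : x ∈ Ioo (-s) s) :
    HasDerivAt (fun t => k / s * _root_.artanh (t / s)) (k / (s ^ 2 - x ^ 2)) x := by
  have hxs : x / s ∈ Ioo (-1) 1 := by
    rw [mem_Ioo, lt_div_iff₀ hs, div_lt_iff₀ hs]
    exact ⟨by linarith [hx.1], by linarith [hx.2]⟩
  have hd := ((hasDerivAt_artanh hxs).comp x ((hasDerivAt_id' x).div_const s)).const_mul (k / s)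
  refine hd.congr_deriv ?_
  have : s ^ 2 - x ^ 2 ≠ 0 := by nlinarith [hx.1, hx.2]
  field_simp

lemma Function.Even.deriv_zero {𝕜 F : Type*} [NontriviallyNormedField 𝕜] [NormedAddCommGroup F]
    [NormedSpace 𝕜 F] [IsAddTorsionFree F] {f : 𝕜 → F} (hf : Function.Even f) :
    deriv f 0 = 0 := by
  have h := deriv_comp_neg f 0
  rw [show (fun x => f (-x)) = f from funext hf, neg_zero] at h
  exact self_eq_neg.mp h

lemma logDeriv_div_sub_mul_cosh_comp {y : ℝ → ℝ} {y' x : ℝ} {c γ D : ℝ} (hc : c ≠ 0)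
    (hy : HasDerivAt y y' x) (hden : γ - D * cosh (y x) ≠ 0) :
    logDeriv (fun t => c / (γ - D * cosh (y t))) x =
      D * sinh (y x) * y' / (γ - D * cosh (y x)) := by
  have hg := (hy.cosh.const_mul D).const_sub γ
  rw [logDeriv_apply, deriv_const_div c hg.differentiableAt hden, hg.deriv]
  field_simp

lemma quadratic_at_div_sub_mul_cosh {F lam γ D : ℝ} (hD : D ^ 2 = γ ^ 2 + 8 * lam * F) (t : ℝ)
    (hden : γ - D * cosh t ≠ 0) :
    2 * lam * (2 * F / (γ - D * cosh t)) ^ 2 + γ * (2 * F / (γ - D * cosh t)) - F =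
      -F * (D * sinh t / (γ - D * cosh t)) ^ 2 := by
  rw [div_pow (D * sinh t), mul_pow, sinh_sq]
  field_simp
  linear_combination (-F) * hD

theorem stmt_11_general (ε F lam₁ γ : ℝ) (hε : 0 < ε) (hF : F < 0)
    (hγ : γ ≤ 0) (hdisc : 0 < γ^2 + 8 * lam₁ * F)
    (y W : ℝ → ℝ)
    (hy : y = fun x => (2 * Real.sqrt (-F) / Real.sqrt (1 + ε)) *
      _root_.artanh (x / Real.sqrt (1 + ε)))
    (hW : W = fun x => 2 * F / (γ - Real.sqrt (γ^2 + 8 * lam₁ * F) * Real.cosh (y x))) :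
    (∀ x ∈ Icc (-1:ℝ) 1, 0 < W x) ∧
    (∀ x : ℝ, W (-x) = W x) ∧
    deriv W 0 = 0 ∧
    (∀ x ∈ Ioo (-1:ℝ) 1,
      (deriv W x / (2 * W x))^2 =
        (2 * lam₁ * (W x)^2 + γ * W x - F) / (1 + ε - x^2)^2) := by
  set D := √(γ ^ 2 + 8 * lam₁ * F)
  have hD : 0 < D := sqrt_pos.2 hdisc
  have hden (x : ℝ) : γ - D * cosh (y x) < 0 := by nlinarith [one_le_cosh (y x)]
  have hWx (x : ℝ) : W x = 2 * F / (γ - D * cosh (y x)) := by rw [hW]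
  have hWeven (x : ℝ) : W (-x) = W x := by
    simp only [hW, hy, neg_div, _root_.artanh_neg, mul_neg, cosh_neg]
  refine ⟨fun x _ => ?_, hWeven, Function.Even.deriv_zero hWeven, fun x hx => ?_⟩
  · rw [hWx]
    exact div_pos_of_neg_of_neg (by linarith) (hden x)
  have hs : 1 < √(1 + ε) := by rw [lt_sqrt zero_le_one]; linarith
  have hy' : HasDerivAt y (2 * √(-F) / (1 + ε - x ^ 2)) x := by
    have h := hasDerivAt_div_mul_artanh_div (2 * √(-F)) (by linarith)
      (⟨by linarith [hx.1], by linarith [hx.2]⟩ : x ∈ Ioo (-√(1 + ε)) √(1 + ε))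
    rwa [sq_sqrt (by linarith), ← hy] at h
  have hlog := logDeriv_div_sub_mul_cosh_comp (by linarith : 2 * F ≠ 0) hy' (hden x).ne
  rw [← hW, logDeriv_apply] at hlog
  have hq : 1 + ε - x ^ 2 ≠ 0 := by nlinarith [hx.1, hx.2]
  calc (deriv W x / (2 * W x)) ^ 2
      = √(-F) ^ 2 * (D * sinh (y x) / (γ - D * cosh (y x))) ^ 2 / (1 + ε - x ^ 2) ^ 2 := by
        rw [div_mul_eq_div_div_swap, hlog]
        field_simp
    _ = (2 * lam₁ * (W x)^2 + γ * W x - F) / (1 + ε - x^2)^2 := by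
        rw [sq_sqrt (by linarith), hWx,
          quadratic_at_div_sub_mul_cosh (sq_sqrt hdisc.le) _ (hden x).ne]

/-- For ε > 0, F < 0, λ₁ ≤ 0, γ ≤ 0 with γ² + 8λ₁F > 0, the function
W(x) = 2F/(γ − √(γ²+8λ₁F)cosh y(x)), y(x) = (2√(−F)/√(1+ε))artanh(x/√(1+ε)),
is positive on [−1,1], even, has W'(0) = 0, and satisfies
(W'/(2W))² = (2λ₁W² + γW − F)/(1+ε−x²)² on (−1,1). -/
theorem stmt_11 (ε F lam₁ γ : ℝ) (hε : 0 < ε) (hF : F < 0) (hlam₁ : lam₁ ≤ 0)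
    (hγ : γ ≤ 0) (hdisc : 0 < γ^2 + 8 * lam₁ * F)
    (y W : ℝ → ℝ)
    (hy : y = fun x => (2 * Real.sqrt (-F) / Real.sqrt (1 + ε)) *
      _root_.artanh (x / Real.sqrt (1 + ε)))
    (hW : W = fun x => 2 * F / (γ - Real.sqrt (γ^2 + 8 * lam₁ * F) * Real.cosh (y x))) :
    (∀ x ∈ Icc (-1:ℝ) 1, 0 < W x) ∧
    (∀ x : ℝ, W (-x) = W x) ∧
    deriv W 0 = 0 ∧
    (∀ x ∈ Ioo (-1:ℝ) 1,
      (deriv W x / (2 * W x))^2 =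
        (2 * lam₁ * (W x)^2 + γ * W x - F) / (1 + ε - x^2)^2) :=
  stmt_11_general ε F lam₁ γ hε hF hγ hdisc y W hy hW
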